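/- For discrete probability measures μ, ν on a finite set X and nonnegative cost c, the map p ↦ W_{c^p}(μ,ν)^{1/p} is bounded below by α^{1/p} · W^{(∞)}_c(μ,ν) for all p ≥ 1, where α > 0 depends only on μ and ν; consequently lim inf_{p→∞} W_{c^p}(μ,ν)^{1/p} ≥ W^{(∞)}_c(μ,ν). -/

import Mathlib

open Finset

/-- A transportation plan between discrete measures `μ` and `ν`. -/
def IsPlan {X : Type*} [Fintype X] (μ ν : X → ℝ) (π : X → X → ℝ) : Prop :=
  (∀ x y, 0 ≤ π x y) ∧ (∀ x, ∑ y, π x y = μ x) ∧ (∀ y, ∑ x, π x y = ν y)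

/-- Total transport cost of a plan. -/
noncomputable def tcost {X : Type*} [Fintype X] (c π : X → X → ℝ) : ℝ :=
  ∑ x, ∑ y, c x y * π x y

open Classical in
/-- Support of a plan, as a finite set of pairs. -/
noncomputable def spt {X : Type*} [Fintype X] (π : X → X → ℝ) : Finset (X × X) :=
  Finset.univ.filter (fun p => π p.1 p.2 ≠ 0)

open Classical in
/-- Support of a discrete measure. -/
noncomputable def msupp {X : Type*} [Fintype X] (μ : X → ℝ) : Finset X :=
  Finset.univ.filter (fun x => μ x ≠ 0)

/-- An optimal transportation plan. -/
def IsOptimal {X : Type*} [Fintype X] (c : X → X → ℝ) (μ ν : X → ℝ) (π : X → X → ℝ) : Prop :=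
  IsPlan μ ν π ∧ ∀ π' : X → X → ℝ, IsPlan μ ν π' → tcost c π ≤ tcost c π'

/-- A trim plan: optimal with support of minimal cardinality among optimal plans. -/
def IsTrim {X : Type*} [Fintype X] (c : X → X → ℝ) (μ ν : X → ℝ) (π : X → X → ℝ) : Prop :=
  IsOptimal c μ ν π ∧
    ∀ π' : X → X → ℝ, IsOptimal c μ ν π' → (spt π).card ≤ (spt π').card

/-- `L^∞` norm of the cost with respect to a plan: max of `c` on the support. -/
noncomputable def linf {X : Type*} [Fintype X] (c π : X → X → ℝ) : ℝ :=
  WithBot.unbotD 0 (((spt π).image (fun p => c p.1 p.2)).max)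

/-- Optimal transport cost `W_c(μ,ν)`. -/
noncomputable def Wc {X : Type*} [Fintype X] (c : X → X → ℝ) (μ ν : X → ℝ) : ℝ :=
  sInf {r | ∃ π, IsPlan μ ν π ∧ tcost c π = r}

/-- Infinity-Wasserstein cost `W_c^{(∞)}(μ,ν)`. -/
noncomputable def Winf {X : Type*} [Fintype X] (c : X → X → ℝ) (μ ν : X → ℝ) : ℝ :=
  sInf {r | ∃ π, IsPlan μ ν π ∧ linf c π = r}

/-- The deterministic plan `(Id, h)_# σ`. -/
def pushF {X : Type*} [DecidableEq X] (h : X → X) (σ : X → ℝ) : X → X → ℝ :=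
  fun x y => if h x = y then σ x else 0

/-- The deterministic plan `(h, Id)_# σ`. -/
def pushB {X : Type*} [DecidableEq X] (h : X → X) (σ : X → ℝ) : X → X → ℝ :=
  fun x y => if h y = x then σ y else 0

/-!
Let `s = W^{(∞)}_c(μ, ν)` and let `π` be any plan. No plan is supported on `{c < s}`, so by the
fractional Hall theorem some set `A` has more `μ`-mass than `ν` puts on its
`{c < s}`-neighbourhood `N(A)`. This gap is a positive value of `∑_A μ - ∑_B ν`, hence at least
`α`, and `π` must carry at least that much mass from `A` to outside `N(A)`, at cost `≥ s^p` per
unit. So `α s^p ≤ W_{c^p}(μ, ν)`; the liminf follows as `α^{1/p} → 1`, while `W_{c^p}^{1/p}`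
stays below the largest cost used by any fixed plan.

The fractional Hall theorem is proved with a subplan of maximal mass along the allowed edges. Let
`A` be the set of points that some maximal subplan leaves undersupplied. Maximal subplans are
closed under averaging, and small exchanges inside averages show that every maximal subplan
saturates `N(A)` and feeds it only from `A`. A deficit would then give `∑_{N(A)} ν < ∑_A μ`.
-/

section

variable {X : Type*} [Fintype X]

open Classical in
noncomputable def nbhd (G : X → X → Prop) (A : Finset X) : Finset X :=
  univ.filter fun y => ∃ x ∈ A, G x y

theorem mem_nbhd {G : X → X → Prop} {A : Finset X} {y : X} :
    y ∈ nbhd G A ↔ ∃ x ∈ A, G x y := by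
  classical simp [nbhd]

def mass (π : X → X → ℝ) : ℝ := ∑ x, ∑ y, π x y

theorem mass_add (π σ : X → X → ℝ) : mass (π + σ) = mass π + mass σ := by
  simp [mass, sum_add_distrib]

structure IsSubplan (G : X → X → Prop) (μ ν : X → ℝ) (π : X → X → ℝ) : Prop where
  nonneg : ∀ x y, 0 ≤ π x y
  rel_of_ne_zero : ∀ x y, π x y ≠ 0 → G x y
  sum_row_le : ∀ x, ∑ y, π x y ≤ μ x
  sum_col_le : ∀ y, ∑ x, π x y ≤ ν y

structure IsMaxSubplan (G : X → X → Prop) (μ ν : X → ℝ) (π : X → X → ℝ) : Prop where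
  isSubplan : IsSubplan G μ ν π
  mass_le : ∀ π', IsSubplan G μ ν π' → mass π' ≤ mass π

variable {G : X → X → Prop} {μ ν : X → ℝ}

theorem isClosed_setOf_isSubplan : IsClosed {π | IsSubplan G μ ν π} := by
  have hset : {π | IsSubplan G μ ν π} = {π | ∀ x y, 0 ≤ π x y} ∩ {π | ∀ x y, π x y ≠ 0 → G x y} ∩
      {π | ∀ x, ∑ y, π x y ≤ μ x} ∩ {π | ∀ y, ∑ x, π x y ≤ ν y} := by
    ext π
    exact ⟨fun ⟨h₁, h₂, h₃, h₄⟩ => ⟨⟨⟨h₁, h₂⟩, h₃⟩, h₄⟩, fun ⟨⟨⟨h₁, h₂⟩, h₃⟩, h₄⟩ => ⟨h₁, h₂, h₃, h₄⟩⟩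
  simp only [hset, Set.ofPred_forall]
  refine .inter (.inter (.inter ?_ ?_) ?_) ?_
  · exact isClosed_iInter fun x => isClosed_iInter fun y =>
      isClosed_le continuous_const (by fun_prop)
  · refine isClosed_iInter fun x => isClosed_iInter fun y => ?_
    by_cases hG : G x y
    · simp [hG]
    · simpa [hG] using isClosed_eq (by fun_prop : Continuous fun π : X → X → ℝ => π x y)
        continuous_const
  · exact isClosed_iInter fun x => isClosed_le (by fun_prop) continuous_const
  · exact isClosed_iInter fun y => isClosed_le (by fun_prop) continuous_const

theorem exists_isMaxSubplan (hμ : ∀ x, 0 ≤ μ x) (hν : ∀ y, 0 ≤ ν y) :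
    ∃ π, IsMaxSubplan G μ ν π := by
  have hbox : {π | IsSubplan G μ ν π} ⊆
      Set.univ.pi fun x => Set.univ.pi fun _ => Set.Icc 0 (μ x) := fun π hπ x _ y _ =>
    ⟨hπ.nonneg x y,
      (single_le_sum (fun y _ => hπ.nonneg x y) (mem_univ y)).trans (hπ.sum_row_le x)⟩
  have hcompact := (isCompact_univ_pi fun x => isCompact_univ_pi fun _ => isCompact_Icc)
    |>.of_isClosed_subset isClosed_setOf_isSubplan hbox
  have hzero : IsSubplan G μ ν 0 := ⟨fun _ _ => le_rfl, fun _ _ h => absurd rfl h,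
    fun x => by simpa using hμ x, fun y => by simpa using hν y⟩
  obtain ⟨π, hπ, hmax⟩ := hcompact.exists_isMaxOn ⟨0, hzero⟩
    (by unfold mass; fun_prop : Continuous (mass : (X → X → ℝ) → ℝ)).continuousOn
  exact ⟨π, hπ, fun π' hπ' => hmax hπ'⟩

theorem IsMaxSubplan.avg {π₁ π₂ : X → X → ℝ} (h₁ : IsMaxSubplan G μ ν π₁)
    (h₂ : IsMaxSubplan G μ ν π₂) : IsMaxSubplan G μ ν fun x y => (π₁ x y + π₂ x y) / 2 := by
  obtain ⟨⟨hn₁, hs₁, hr₁, hc₁⟩, hm₁⟩ := h₁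
  obtain ⟨⟨hn₂, hs₂, hr₂, hc₂⟩, hm₂⟩ := h₂
  refine ⟨⟨fun x y => by linarith [hn₁ x y, hn₂ x y], fun x y h => ?_, fun x => ?_, fun y => ?_⟩,
    fun π' hπ' => ?_⟩
  · by_contra hG
    simp [not_not.1 ((hs₁ x y).mt hG), not_not.1 ((hs₂ x y).mt hG)] at h
  · rw [← sum_div, sum_add_distrib]; linarith [hr₁ x, hr₂ x]
  · rw [← sum_div, sum_add_distrib]; linarith [hc₁ y, hc₂ y]
  · simp only [mass, ← sum_div, sum_add_distrib] at *
    linarith [hm₁ π' hπ', hm₂ π' hπ']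

def bump [DecidableEq X] (a b : X) (ε : ℝ) : X → X → ℝ := fun x y => if x = a ∧ y = b then ε else 0

theorem sum_bump_row [DecidableEq X] (a b x : X) (ε : ℝ) :
    ∑ y, bump a b ε x y = if x = a then ε else 0 := by
  by_cases h : x = a <;> simp [bump, h]

theorem sum_bump_col [DecidableEq X] (a b y : X) (ε : ℝ) :
    ∑ x, bump a b ε x y = if y = b then ε else 0 := by
  by_cases h : y = b <;> simp [bump, h]

theorem mass_bump [DecidableEq X] (a b : X) (ε : ℝ) : mass (bump a b ε) = ε := by
  simp [mass, sum_bump_row]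

theorem IsMaxSubplan.sum_col_eq {π₁ π₂ : X → X → ℝ} {a b : X} (h₁ : IsMaxSubplan G μ ν π₁)
    (h₂ : IsMaxSubplan G μ ν π₂) (ha : ∑ y, π₁ a y < μ a) (hab : G a b) :
    ∑ x, π₂ x b = ν b := by
  classical
  by_contra hb
  replace hb : ∑ x, π₂ x b < ν b := (h₂.isSubplan.sum_col_le b).lt_of_ne hb
  set π : X → X → ℝ := fun x y => (π₁ x y + π₂ x y) / 2
  obtain ⟨⟨hn, hs, hr, hc⟩, hmax⟩ : IsMaxSubplan G μ ν π := h₁.avg h₂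
  have hra : ∑ y, π a y < μ a := by
    simp only [π, ← sum_div, sum_add_distrib]; linarith [h₂.isSubplan.sum_row_le a]
  have hcb : ∑ x, π x b < ν b := by
    simp only [π, ← sum_div, sum_add_distrib]; linarith [h₁.isSubplan.sum_col_le b]
  set ε := min (μ a - ∑ y, π a y) (ν b - ∑ x, π x b)
  have hε : 0 < ε := lt_min (by linarith) (by linarith)
  have hεa : ε ≤ μ a - ∑ y, π a y := min_le_left _ _
  have hεb : ε ≤ ν b - ∑ x, π x b := min_le_right _ _
  have hsub : IsSubplan G μ ν (π + bump a b ε) := by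
    refine ⟨fun x y => ?_, fun x y h => ?_, fun x => ?_, fun y => ?_⟩
    · simp only [Pi.add_apply, bump]; split_ifs <;> linarith [hn x y]
    · by_cases hxy : x = a ∧ y = b
      · exact hxy.1 ▸ hxy.2 ▸ hab
      · exact hs x y (by simpa [bump, hxy] using h)
    · simp only [Pi.add_apply, sum_add_distrib, sum_bump_row]
      split_ifs with hx <;> (try subst hx) <;> linarith [hr x]
    · simp only [Pi.add_apply, sum_add_distrib, sum_bump_col]
      split_ifs with hy <;> (try subst hy) <;> linarith [hc y]
  have := hmax _ hsub
  rw [mass_add, mass_bump] at this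
  linarith

theorem IsMaxSubplan.exists_sum_row_lt {π₁ π₂ : X → X → ℝ} {a b x : X}
    (h₁ : IsMaxSubplan G μ ν π₁) (h₂ : IsMaxSubplan G μ ν π₂) (ha : ∑ y, π₁ a y < μ a)
    (hab : G a b) (hx : π₂ x b ≠ 0) : ∃ π, IsMaxSubplan G μ ν π ∧ ∑ y, π x y < μ x := by
  classical
  by_cases hxa : x = a
  · exact ⟨π₁, h₁, hxa ▸ ha⟩
  set π : X → X → ℝ := fun x y => (π₁ x y + π₂ x y) / 2
  obtain ⟨⟨hn, hs, hr, hc⟩, hmax⟩ : IsMaxSubplan G μ ν π := h₁.avg h₂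
  have hra : ∑ y, π a y < μ a := by
    simp only [π, ← sum_div, sum_add_distrib]; linarith [h₂.isSubplan.sum_row_le a]
  have hxb : 0 < π x b := by
    have := (h₂.isSubplan.nonneg x b).lt_of_ne' hx
    simp only [π]; linarith [h₁.isSubplan.nonneg x b]
  set ε := min (π x b) (μ a - ∑ y, π a y)
  have hε : 0 < ε := lt_min hxb (by linarith)
  have hεx : ε ≤ π x b := min_le_left _ _
  have hεa : ε ≤ μ a - ∑ y, π a y := min_le_right _ _
  -- `b` now receives `ε` of its mass from `a` instead of from `x`
  set π' := π + bump a b ε + bump x b (-ε)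
  have hsub : IsSubplan G μ ν π' := by
    refine ⟨fun x' y' => ?_, fun x' y' h => ?_, fun x' => ?_, fun y' => ?_⟩
    · simp only [π', Pi.add_apply, bump]
      split_ifs with hab' hxb' hxb'
      · linarith [hn x' y']
      · linarith [hn x' y']
      · obtain ⟨rfl, rfl⟩ := hxb'; linarith
      · linarith [hn x' y']
    · by_cases hπ : π x' y' = 0
      · by_cases hab' : x' = a ∧ y' = b
        · exact hab'.1 ▸ hab'.2 ▸ hab
        · have hxb' : x' = x ∧ y' = b := by
            by_contra hxb'
            simp [π', bump, hπ, hab', hxb'] at h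
          exact absurd (hxb'.1 ▸ hxb'.2 ▸ hπ) hxb.ne'
      · exact hs x' y' hπ
    · simp only [π', Pi.add_apply, sum_add_distrib, sum_bump_row]
      split_ifs with hx'a <;> (try subst hx'a) <;> linarith [hr x']
    · simp only [π', Pi.add_apply, sum_add_distrib, sum_bump_col]
      split_ifs <;> linarith [hc y']
  have hmass : mass π' = mass π := by simp only [π', mass_add, mass_bump]; ring
  refine ⟨π', ⟨hsub, fun π'' h => hmass ▸ hmax π'' h⟩, ?_⟩
  simp only [π', Pi.add_apply, sum_add_distrib, sum_bump_row, if_neg hxa, ↓reduceIte]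
  linarith [hr x]

theorem exists_isPlan_of_hall (hμ : ∀ x, 0 ≤ μ x) (hν : ∀ y, 0 ≤ ν y)
    (hμν : ∑ x, μ x = ∑ y, ν y) (hall : ∀ A, ∑ x ∈ A, μ x ≤ ∑ y ∈ nbhd G A, ν y) :
    ∃ π, IsPlan μ ν π ∧ ∀ x y, π x y ≠ 0 → G x y := by
  classical
  obtain ⟨π, hπ⟩ := exists_isMaxSubplan (G := G) hμ hν
  have ⟨hn, hs, hr, hc⟩ := hπ.isSubplan
  have hrow : ∀ x, ∑ y, π x y = μ x := by
    by_contra! ⟨x₀, hx₀⟩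
    replace hx₀ := (hr x₀).lt_of_ne hx₀
    set A := univ.filter fun x => ∃ π', IsMaxSubplan G μ ν π' ∧ ∑ y, π' x y < μ x
    have hx₀A : x₀ ∈ A := mem_filter.2 ⟨mem_univ _, π, hπ, hx₀⟩
    have hA : ∀ y ∈ nbhd G A, ∑ x ∈ A, π x y = ν y := by
      intro y hy
      obtain ⟨a, ha, hay⟩ := mem_nbhd.1 hy
      obtain ⟨π₁, h₁, ha⟩ := (mem_filter.1 ha).2
      rw [← h₁.sum_col_eq hπ ha hay]
      refine sum_subset (subset_univ A) fun x _ hx => ?_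
      by_contra hxy
      exact hx (mem_filter.2 ⟨mem_univ _, h₁.exists_sum_row_lt hπ ha hay hxy⟩)
    have : ∑ y ∈ nbhd G A, ν y < ∑ x ∈ A, μ x := calc
      ∑ y ∈ nbhd G A, ν y = ∑ x ∈ A, ∑ y ∈ nbhd G A, π x y := by
        rw [sum_comm]; exact (sum_congr rfl hA).symm
      _ ≤ ∑ x ∈ A, ∑ y, π x y :=
        sum_le_sum fun x _ => sum_le_sum_of_subset_of_nonneg (subset_univ _) fun y _ _ => hn x y
      _ < ∑ x ∈ A, μ x := sum_lt_sum (fun x _ => hr x) ⟨x₀, hx₀A, hx₀⟩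
    exact (hall A).not_gt this
  have hcol : ∀ y, ∑ x, π x y = ν y := by
    have htotal : ∑ y, ∑ x, π x y = ∑ y, ν y := by
      rw [sum_comm, sum_congr rfl fun x _ => hrow x, hμν]
    exact fun y => (sum_eq_sum_iff_of_le fun y _ => hc y).1 htotal y (mem_univ y)
  exact ⟨π, ⟨hn, hrow, hcol⟩, hs⟩

variable {c π : X → X → ℝ}

theorem linf_eq_zero_or_exists (c π : X → X → ℝ) :
    linf c π = 0 ∨ ∃ x y, π x y ≠ 0 ∧ linf c π = c x y := by
  classical
  unfold linf
  rcases h : ((spt π).image fun p => c p.1 p.2).max with _ | v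
  · exact Or.inl (by rw [h]; rfl)
  · obtain ⟨p, hp, rfl⟩ := mem_image.1 (mem_of_max h)
    exact Or.inr ⟨p.1, p.2, (mem_filter.1 hp).2, by rw [h]; rfl⟩

theorem le_linf {x y : X} (h : π x y ≠ 0) : c x y ≤ linf c π := by
  classical
  have hmem : c x y ∈ (spt π).image fun p => c p.1 p.2 :=
    mem_image_of_mem _ (mem_filter.2 ⟨mem_univ (x, y), h⟩)
  obtain ⟨v, hv⟩ := max_of_mem hmem
  have := le_max hmem
  rw [hv, WithBot.coe_le_coe] at this
  simpa [linf, hv] using this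

theorem linf_nonneg (hc : ∀ x y, 0 ≤ c x y) (π : X → X → ℝ) : 0 ≤ linf c π := by
  obtain h | ⟨x, y, -, h⟩ := linf_eq_zero_or_exists c π <;> rw [h]
  exact hc x y

theorem linf_lt {t : ℝ} (ht : 0 < t) (h : ∀ x y, π x y ≠ 0 → c x y < t) : linf c π < t := by
  obtain h' | ⟨x, y, hxy, h'⟩ := linf_eq_zero_or_exists c π <;> rw [h']
  exacts [ht, h x y hxy]

theorem Winf_nonneg (hc : ∀ x y, 0 ≤ c x y) : 0 ≤ Winf c μ ν :=
  Real.sInf_nonneg <| by rintro _ ⟨π, -, rfl⟩; exact linf_nonneg hc π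

theorem Winf_le_linf (hc : ∀ x y, 0 ≤ c x y) (hπ : IsPlan μ ν π) : Winf c μ ν ≤ linf c π :=
  csInf_le ⟨0, by rintro _ ⟨π, -, rfl⟩; exact linf_nonneg hc π⟩ ⟨π, hπ, rfl⟩

theorem tcost_nonneg (hc : ∀ x y, 0 ≤ c x y) (hπ : ∀ x y, 0 ≤ π x y) : 0 ≤ tcost c π :=
  sum_nonneg fun x _ => sum_nonneg fun y _ => mul_nonneg (hc x y) (hπ x y)

theorem Wc_nonneg (hc : ∀ x y, 0 ≤ c x y) : 0 ≤ Wc c μ ν :=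
  Real.sInf_nonneg <| by rintro _ ⟨π, hπ, rfl⟩; exact tcost_nonneg hc hπ.1

theorem Wc_le_tcost (hc : ∀ x y, 0 ≤ c x y) (hπ : IsPlan μ ν π) : Wc c μ ν ≤ tcost c π :=
  csInf_le ⟨0, by rintro _ ⟨π, hπ, rfl⟩; exact tcost_nonneg hc hπ.1⟩ ⟨π, hπ, rfl⟩

theorem le_Wc {a : ℝ} (hπ : IsPlan μ ν π) (h : ∀ π, IsPlan μ ν π → a ≤ tcost c π) :
    a ≤ Wc c μ ν :=
  le_csInf ⟨_, π, hπ, rfl⟩ <| by rintro _ ⟨π, hπ, rfl⟩; exact h π hπ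

theorem exists_isPlan (hμ : ∀ x, 0 ≤ μ x) (hν : ∀ y, 0 ≤ ν y) (hμν : ∑ x, μ x = ∑ y, ν y) :
    ∃ π, IsPlan μ ν π := by
  obtain ⟨π, hπ, -⟩ := exists_isPlan_of_hall (G := fun _ _ => True) hμ hν hμν fun A => by
    obtain rfl | ⟨a, ha⟩ := A.eq_empty_or_nonempty
    · simpa using sum_nonneg fun y _ => hν y
    · have : nbhd (fun _ _ => True) A = univ :=
        eq_univ_of_forall fun y => mem_nbhd.2 ⟨a, ha, trivial⟩
      rw [this, ← hμν]
      exact sum_le_sum_of_subset_of_nonneg (subset_univ A) fun x _ _ => hμ x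
  exact ⟨π, hπ⟩

theorem sum_sub_sum_le_sum_compl [DecidableEq X] (hπ : IsPlan μ ν π) (A B : Finset X) :
    ∑ x ∈ A, μ x - ∑ y ∈ B, ν y ≤ ∑ x ∈ A, ∑ y ∈ Bᶜ, π x y := by
  obtain ⟨hn, hr, hc⟩ := hπ
  have hsplit : ∑ x ∈ A, μ x = ∑ x ∈ A, ∑ y ∈ B, π x y + ∑ x ∈ A, ∑ y ∈ Bᶜ, π x y := by
    rw [← sum_add_distrib]
    exact sum_congr rfl fun x _ => by rw [sum_add_sum_compl, hr]
  have hB : ∑ x ∈ A, ∑ y ∈ B, π x y ≤ ∑ y ∈ B, ν y := calc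
    ∑ x ∈ A, ∑ y ∈ B, π x y ≤ ∑ x, ∑ y ∈ B, π x y :=
      sum_le_sum_of_subset_of_nonneg (subset_univ A) fun x _ _ => sum_nonneg fun y _ => hn x y
    _ = ∑ y ∈ B, ν y := by rw [sum_comm]; exact sum_congr rfl fun y _ => hc y
  linarith

theorem sum_sub_sum_mul_le_tcost [DecidableEq X] {f : X → X → ℝ} {k : ℝ} (hπ : IsPlan μ ν π)
    (hf : ∀ x y, 0 ≤ f x y) (hk : 0 ≤ k) {A B : Finset X} (hAB : ∀ x ∈ A, ∀ y ∉ B, k ≤ f x y) :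
    (∑ x ∈ A, μ x - ∑ y ∈ B, ν y) * k ≤ tcost f π := by
  have hterm : ∀ x y, 0 ≤ f x y * π x y := fun x y => mul_nonneg (hf x y) (hπ.1 x y)
  calc (∑ x ∈ A, μ x - ∑ y ∈ B, ν y) * k ≤ (∑ x ∈ A, ∑ y ∈ Bᶜ, π x y) * k :=
      mul_le_mul_of_nonneg_right (sum_sub_sum_le_sum_compl hπ A B) hk
    _ = ∑ x ∈ A, ∑ y ∈ Bᶜ, k * π x y := by rw [mul_comm]; simp only [mul_sum]
    _ ≤ ∑ x ∈ A, ∑ y ∈ Bᶜ, f x y * π x y :=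
      sum_le_sum fun x hx => sum_le_sum fun y hy =>
        mul_le_mul_of_nonneg_right (hAB x hx y (mem_compl.1 hy)) (hπ.1 x y)
    _ ≤ ∑ x ∈ A, ∑ y, f x y * π x y :=
      sum_le_sum fun x _ => sum_le_sum_of_subset_of_nonneg (subset_univ _) fun y _ _ => hterm x y
    _ ≤ tcost f π :=
      sum_le_sum_of_subset_of_nonneg (subset_univ A) fun x _ _ => sum_nonneg fun y _ => hterm x y

theorem mul_rpow_Winf_le_tcost (hμ : ∀ x, 0 ≤ μ x) (hν : ∀ y, 0 ≤ ν y)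
    (hμν : ∑ x, μ x = ∑ y, ν y) (hc : ∀ x y, 0 ≤ c x y) {α p : ℝ} (hp : 0 < p)
    (hα : ∀ A B : Finset X, 0 < ∑ x ∈ A, μ x - ∑ y ∈ B, ν y → α ≤ ∑ x ∈ A, μ x - ∑ y ∈ B, ν y)
    (hπ : IsPlan μ ν π) : α * Winf c μ ν ^ p ≤ tcost (fun x y => c x y ^ p) π := by
  classical
  have hcp : ∀ x y, 0 ≤ c x y ^ p := fun x y => Real.rpow_nonneg (hc x y) p
  obtain hs | hs := (Winf_nonneg (μ := μ) (ν := ν) hc).eq_or_lt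
  · rw [← hs, Real.zero_rpow hp.ne', mul_zero]
    exact tcost_nonneg hcp hπ.1
  set s := Winf c μ ν
  -- A plan using only costs `< s` would beat `Winf`, so Hall's condition fails for them.
  obtain ⟨A, hA⟩ : ∃ A, ∑ y ∈ nbhd (fun x y => c x y < s) A, ν y < ∑ x ∈ A, μ x := by
    by_contra! hall
    obtain ⟨π', hπ', hsupp⟩ := exists_isPlan_of_hall hμ hν hμν hall
    exact (Winf_le_linf hc hπ').not_gt (linf_lt hs hsupp)
  calc α * s ^ p ≤ (∑ x ∈ A, μ x - ∑ y ∈ nbhd (fun x y => c x y < s) A, ν y) * s ^ p :=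
      mul_le_mul_of_nonneg_right (hα _ _ (sub_pos.2 hA)) (Real.rpow_nonneg hs.le p)
    _ ≤ tcost (fun x y => c x y ^ p) π :=
      sum_sub_sum_mul_le_tcost hπ hcp (Real.rpow_nonneg hs.le p) fun x hx y hy =>
        Real.rpow_le_rpow hs.le (not_lt.1 fun h => hy (mem_nbhd.2 ⟨x, hx, h⟩)) hp.le

theorem rpow_mul_Winf_le_Wc_rpow (hμ : ∀ x, 0 ≤ μ x) (hν : ∀ y, 0 ≤ ν y)
    (hμν : ∑ x, μ x = ∑ y, ν y) (hc : ∀ x y, 0 ≤ c x y) {α p : ℝ} (hα₀ : 0 ≤ α) (hp : 0 < p)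
    (hα : ∀ A B : Finset X, 0 < ∑ x ∈ A, μ x - ∑ y ∈ B, ν y → α ≤ ∑ x ∈ A, μ x - ∑ y ∈ B, ν y) :
    α ^ (1 / p) * Winf c μ ν ≤ Wc (fun x y => c x y ^ p) μ ν ^ (1 / p) := by
  obtain ⟨π, hπ⟩ := exists_isPlan hμ hν hμν
  have hW := Winf_nonneg (μ := μ) (ν := ν) hc
  calc α ^ (1 / p) * Winf c μ ν = (α * Winf c μ ν ^ p) ^ (1 / p) := by
        rw [Real.mul_rpow hα₀ (Real.rpow_nonneg hW p), one_div, Real.rpow_rpow_inv hW hp.ne']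
    _ ≤ Wc (fun x y => c x y ^ p) μ ν ^ (1 / p) :=
      Real.rpow_le_rpow (mul_nonneg hα₀ (Real.rpow_nonneg hW p))
        (le_Wc hπ fun π hπ => mul_rpow_Winf_le_tcost hμ hν hμν hc hp hα hπ) (by positivity)

theorem tcost_rpow_le_linf_rpow (hc : ∀ x y, 0 ≤ c x y) (hμ1 : ∑ x, μ x = 1)
    (hπ : IsPlan μ ν π) {p : ℝ} (hp : 0 ≤ p) :
    tcost (fun x y => c x y ^ p) π ≤ linf c π ^ p := calc
  tcost (fun x y => c x y ^ p) π ≤ ∑ x, ∑ y, linf c π ^ p * π x y :=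
    sum_le_sum fun x _ => sum_le_sum fun y _ => by
      by_cases h : π x y = 0
      · simp [h]
      · exact mul_le_mul_of_nonneg_right (Real.rpow_le_rpow (hc x y) (le_linf h) hp) (hπ.1 x y)
  _ = linf c π ^ p := by simp only [← mul_sum, hπ.2.1, hμ1, mul_one]

theorem Wc_rpow_rpow_le_linf (hc : ∀ x y, 0 ≤ c x y) (hμ1 : ∑ x, μ x = 1)
    (hπ : IsPlan μ ν π) {p : ℝ} (hp : 0 < p) :
    Wc (fun x y => c x y ^ p) μ ν ^ (1 / p) ≤ linf c π := by
  have hcp : ∀ x y, 0 ≤ c x y ^ p := fun x y => Real.rpow_nonneg (hc x y) p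
  calc Wc (fun x y => c x y ^ p) μ ν ^ (1 / p) ≤ (linf c π ^ p) ^ (1 / p) :=
        Real.rpow_le_rpow (Wc_nonneg hcp)
          ((Wc_le_tcost hcp hπ).trans (tcost_rpow_le_linf_rpow hc hμ1 hπ hp.le)) (by positivity)
    _ = linf c π := by rw [one_div, Real.rpow_rpow_inv (linf_nonneg hc π) hp.ne']

end

theorem sInf_abs_sum_sub_sum_le {X : Type*} {μ ν : X → ℝ} {A B : Finset X}
    (h : 0 < ∑ x ∈ A, μ x - ∑ y ∈ B, ν y) :
    sInf {r | ∃ A B : Finset X, r = |∑ x ∈ A, μ x - ∑ y ∈ B, ν y| ∧ 0 < r} ≤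
      ∑ x ∈ A, μ x - ∑ y ∈ B, ν y :=
  csInf_le ⟨0, fun _ ⟨_, _, _, hr⟩ => hr.le⟩ ⟨A, B, (abs_of_pos h).symm, h⟩

open Filter Topology in
theorem le_liminf_of_rpow_one_div_mul_le {u : ℝ → ℝ} {α w b : ℝ} (hα : 0 < α)
    (hlow : ∀ p, 1 ≤ p → α ^ (1 / p) * w ≤ u p) (hup : ∀ p, 1 ≤ p → u p ≤ b) :
    w ≤ liminf u atTop := by
  have hroot : Tendsto (fun p : ℝ => α ^ (1 / p)) atTop (𝓝 1) := by
    simpa [one_div, Function.comp_def] using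
      (Real.continuousAt_const_rpow hα.ne' (b := 0)).tendsto.comp tendsto_inv_atTop_zero
  have hlim : Tendsto (fun p : ℝ => α ^ (1 / p) * w) atTop (𝓝 w) := by
    simpa using hroot.mul_const w
  rw [← hlim.liminf_eq]
  exact liminf_le_liminf ((eventually_ge_atTop 1).mono hlow) hlim.isBoundedUnder_ge
    (isCoboundedUnder_ge_of_eventually_le _ ((eventually_ge_atTop 1).mono hup))

/-- `α^{1/p} · W^{(∞)}_c ≤ W_{c^p}^{1/p}` for all `p ≥ 1`, hence the
liminf as `p → ∞` of the `p`-costs dominates the infinity cost. -/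
theorem liminf_Wcp_ge_Winf {X : Type*} [Fintype X]
    (μ ν : X → ℝ) (c : X → X → ℝ)
    (hμpos : ∀ x, 0 < μ x) (hνpos : ∀ y, 0 < ν y)
    (hμ1 : ∑ x, μ x = 1) (hν1 : ∑ y, ν y = 1)
    (hc : ∀ x y, 0 ≤ c x y)
    (α : ℝ)
    (hα : α = sInf {r | ∃ A B : Finset X,
      r = |∑ x ∈ A, μ x - ∑ y ∈ B, ν y| ∧ 0 < r})
    (hαpos : 0 < α) :
    (∀ p : ℝ, 1 ≤ p →
      α ^ (1 / p) * Winf c μ ν ≤ (Wc (fun x y => c x y ^ p) μ ν) ^ (1 / p)) ∧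
    Winf c μ ν ≤
      Filter.liminf (fun p : ℝ => (Wc (fun x y => c x y ^ p) μ ν) ^ (1 / p))
        Filter.atTop := by
  have hμ : ∀ x, 0 ≤ μ x := fun x => (hμpos x).le
  have hν : ∀ y, 0 ≤ ν y := fun y => (hνpos y).le
  have hμν : ∑ x, μ x = ∑ y, ν y := hμ1.trans hν1.symm
  have hlow : ∀ p : ℝ, 1 ≤ p →
      α ^ (1 / p) * Winf c μ ν ≤ Wc (fun x y => c x y ^ p) μ ν ^ (1 / p) := fun p hp =>
    rpow_mul_Winf_le_Wc_rpow hμ hν hμν hc hαpos.le (by linarith) fun _ _ h =>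
      hα ▸ sInf_abs_sum_sub_sum_le h
  obtain ⟨π, hπ⟩ := exists_isPlan hμ hν hμν
  exact ⟨hlow, le_liminf_of_rpow_one_div_mul_le hαpos hlow fun p hp =>
    Wc_rpow_rpow_le_linf hc hμ1 hπ (by linarith)⟩
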